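/- arXiv:1704.02232 — 9 statements merged into one kernel-verified Lean document; each statement's English description precedes it below -/
import Mathlib

section
/- For every real number x with 0 < x < 1, it holds that -((1-x)/x) * log(1-x) < sqrt(1-x). -/
/-!
With `s = √(1 - x)` the inequality becomes `s - s⁻¹ < 2 log s` for `0 < s < 1`. This holds because
`2 log s - s + s⁻¹` vanishes at `s = 1` and has derivative `-(s⁻¹ - 1)²`, negative on `(0, 1)`.
-/

open Real Set

lemma strictAntiOn_two_mul_log_sub_add_inv :
    StrictAntiOn (fun s : ℝ => 2 * log s - s + s⁻¹) (Ioc 0 1) := by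
  have hderiv (s : ℝ) (hs : 0 < s) :
      HasDerivAt (fun s : ℝ => 2 * log s - s + s⁻¹) (2 * s⁻¹ - 1 + -(s ^ 2)⁻¹) s :=
    (((hasDerivAt_log hs.ne').const_mul 2).sub (hasDerivAt_id s)).add (hasDerivAt_inv hs.ne')
  refine strictAntiOn_of_hasDerivWithinAt_neg (convex_Ioc 0 1)
    (fun s hs => (hderiv s hs.1).continuousAt.continuousWithinAt)
    (fun s hs => (hderiv s (interior_subset hs).1).hasDerivWithinAt) (fun s hs => ?_)
  rw [interior_Ioc] at hs
  have h : 1 < s⁻¹ := (one_lt_inv₀ hs.1).mpr hs.2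
  rw [← inv_pow]
  nlinarith

lemma sub_inv_lt_two_mul_log {s : ℝ} (h0 : 0 < s) (h1 : s < 1) : s - s⁻¹ < 2 * log s := by
  have := strictAntiOn_two_mul_log_sub_add_inv ⟨h0, h1.le⟩ ⟨one_pos, le_rfl⟩ h1
  simp only [log_one, inv_one] at this
  linarith

lemma neg_mul_log_lt_sqrt_mul_one_sub {t : ℝ} (h0 : 0 < t) (h1 : t < 1) :
    -(t * log t) < √t * (1 - t) := by
  set s := √t
  have hs0 : 0 < s := sqrt_pos.mpr h0
  have hst : s ^ 2 = t := sq_sqrt h0.le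
  have hs1 : s < 1 := by nlinarith
  have hlog : log t = 2 * log s := by rw [← hst, log_pow]; push_cast; ring
  have hinv : s * s⁻¹ = 1 := mul_inv_cancel₀ hs0.ne'
  rw [hlog, ← hst]
  nlinarith [mul_lt_mul_of_pos_left (sub_inv_lt_two_mul_log hs0 hs1) hs0]

theorem stmt0 (x : ℝ) (hx0 : 0 < x) (hx1 : x < 1) :
    -((1 - x) / x) * Real.log (1 - x) < Real.sqrt (1 - x) := by
  have h := neg_mul_log_lt_sqrt_mul_one_sub (t := 1 - x) (by linarith) (by linarith)
  rw [sub_sub_cancel] at h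
  rw [neg_mul, div_mul_eq_mul_div, ← neg_div, div_lt_iff₀ hx0]
  linarith
end

section
/- The function f(x) = (sqrt(1-x)/x) * log(1-x) is strictly increasing on the interval (0,1), and its limit as x tends to 0 from above equals -1. Consequently f(x) > -1 for all x in (0,1). -/
/-!
The derivative of `f x = √(1 - x) / x * log (1 - x)` is `-(2 - x) log (1 - x) - 2x` divided by a
positive quantity, and this numerator is positive on `(0, 1)` by the classical bound
`2a / (a + 2) < log (1 + a)` taken at `a = x / (1 - x)`. Near `0`, `√(1 - x) → 1` and
`log (1 - x) / x → -1`, and a strictly increasing function stays strictly above its right limit at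
the left endpoint.
-/

open Real Filter Set Topology

theorem two_mul_div_two_sub_lt_neg_log_one_sub {x : ℝ} (hx0 : 0 < x) (hx1 : x < 1) :
    2 * x / (2 - x) < -log (1 - x) := by
  have h1x : 1 - x ≠ 0 := by linarith
  have key := lt_log_one_add_of_pos (div_pos hx0 (sub_pos.mpr hx1))
  have hlhs : 2 * (x / (1 - x)) / (x / (1 - x) + 2) = 2 * x / (2 - x) := by
    have hden : x / (1 - x) + 2 = (2 - x) / (1 - x) := by
      field_simp
      ring
    rw [hden, ← mul_div_assoc, div_div_div_cancel_right₀ h1x]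
  have hrhs : 1 + x / (1 - x) = (1 - x)⁻¹ := by
    field_simp
    ring
  rwa [hlhs, hrhs, log_inv] at key

theorem hasDerivAt_log_one_sub {x : ℝ} (hx : x ≠ 1) :
    HasDerivAt (fun y => log (1 - y)) (-(1 - x)⁻¹) x := by
  have := ((hasDerivAt_id x).const_sub 1).log (sub_ne_zero.mpr hx.symm)
  simpa [div_eq_mul_inv] using this

theorem tendsto_log_one_sub_div_self :
    Tendsto (fun x => log (1 - x) / x) (𝓝[≠] 0) (𝓝 (-1)) := by
  have := (hasDerivAt_log_one_sub (x := 0) zero_ne_one).tendsto_slope_zero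
  simpa [div_eq_inv_mul] using this

theorem StrictMonoOn.lt_of_tendsto_nhdsGT {α β : Type*} [LinearOrder α] [TopologicalSpace α]
    [OrderTopology α] [DenselyOrdered α] [LinearOrder β] [TopologicalSpace β]
    [OrderClosedTopology β] {f : α → β} {a b x : α} {l : β} (hf : StrictMonoOn f (Ioo a b))
    (hlim : Tendsto f (𝓝[>] a) (𝓝 l)) (hx : x ∈ Ioo a b) : l < f x := by
  obtain ⟨m, ham, hmx⟩ := exists_between hx.1
  have hm : m ∈ Ioo a b := ⟨ham, hmx.trans hx.2⟩
  have : (𝓝[>] a).NeBot := nhdsGT_neBot_of_exists_gt ⟨m, ham⟩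
  have hlm : l ≤ f m := le_of_tendsto hlim <| by
    filter_upwards [Ioo_mem_nhdsGT ham] with y hy
    exact (hf ⟨hy.1, hy.2.trans hm.2⟩ hm hy.2).le
  exact hlm.trans_lt (hf hm hx hmx)

theorem hasDerivAt_sqrt_one_sub_div_mul_log_one_sub {x : ℝ} (hx0 : x ≠ 0) (hx1 : x < 1) :
    HasDerivAt (fun y => √(1 - y) / y * log (1 - y))
      ((-(2 - x) * log (1 - x) - 2 * x) / (2 * √(1 - x) * x ^ 2)) x := by
  have h1x : 0 < 1 - x := sub_pos.mpr hx1
  have hsqrt : HasDerivAt (fun y => √(1 - y)) (-(2 * √(1 - x))⁻¹) x := by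
    simpa [div_eq_mul_inv] using ((hasDerivAt_id x).const_sub 1).sqrt h1x.ne'
  have hs : √(1 - x) ≠ 0 := (sqrt_pos.mpr h1x).ne'
  refine ((hsqrt.div (hasDerivAt_id x) hx0).mul (hasDerivAt_log_one_sub hx1.ne)).congr_deriv ?_
  have h1x' : 1 - x ≠ 0 := h1x.ne'
  simp only [Pi.div_apply, id]
  field_simp
  rw [sq_sqrt h1x.le]
  ring

theorem strictMonoOn_sqrt_one_sub_div_mul_log_one_sub :
    StrictMonoOn (fun x => √(1 - x) / x * log (1 - x)) (Ioo 0 1) := by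
  have hderiv (x : ℝ) (hx : x ∈ Ioo (0 : ℝ) 1) :=
    hasDerivAt_sqrt_one_sub_div_mul_log_one_sub hx.1.ne' hx.2
  refine strictMonoOn_of_hasDerivWithinAt_pos (convex_Ioo 0 1)
    (fun x hx => (hderiv x hx).continuousAt.continuousWithinAt)
    (fun x hx => (hderiv x (interior_subset hx)).hasDerivWithinAt) ?_
  rw [interior_Ioo]
  rintro x ⟨hx0, hx1⟩
  have h2x : 0 < 2 - x := by linarith
  have hnum : 2 * x < -(2 - x) * log (1 - x) := by
    have := (div_lt_iff₀ h2x).mp (two_mul_div_two_sub_lt_neg_log_one_sub hx0 hx1)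
    linarith
  have hs : 0 < √(1 - x) := sqrt_pos.mpr (sub_pos.mpr hx1)
  exact div_pos (sub_pos.mpr hnum) (by positivity)

theorem tendsto_sqrt_one_sub_div_mul_log_one_sub :
    Tendsto (fun x => √(1 - x) / x * log (1 - x)) (𝓝[≠] 0) (𝓝 (-1)) := by
  have hsqrt : Tendsto (fun x : ℝ => √(1 - x)) (𝓝[≠] 0) (𝓝 1) := by
    have : Continuous (fun x : ℝ => √(1 - x)) := by fun_prop
    simpa using (this.tendsto 0).mono_left nhdsWithin_le_nhds
  simpa [div_mul_eq_mul_div, mul_div_assoc] using hsqrt.mul tendsto_log_one_sub_div_self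

theorem stmt1 :
    StrictMonoOn (fun x : ℝ => (Real.sqrt (1 - x) / x) * Real.log (1 - x)) (Set.Ioo 0 1) ∧
    Filter.Tendsto (fun x : ℝ => (Real.sqrt (1 - x) / x) * Real.log (1 - x))
      (nhdsWithin 0 (Set.Ioi 0)) (nhds (-1)) ∧
    ∀ x ∈ Set.Ioo (0 : ℝ) 1, (Real.sqrt (1 - x) / x) * Real.log (1 - x) > -1 := by
  have hlim := tendsto_sqrt_one_sub_div_mul_log_one_sub.mono_left (nhdsGT_le_nhdsNE 0)
  exact ⟨strictMonoOn_sqrt_one_sub_div_mul_log_one_sub, hlim,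
    fun x hx => strictMonoOn_sqrt_one_sub_div_mul_log_one_sub.lt_of_tendsto_nhdsGT hlim hx⟩
end

section
/- For all real numbers θ_L, θ_R with 0 < θ_L < 1 and 0 < θ_R < 1, it holds that 2 - θ_L - θ_R - 2 * ((1-θ_L)(1-θ_R)/(θ_L θ_R)) * log(1-θ_L) * log(1-θ_R) > 0. -/
/-!
Put `x = 1 - θL`, `y = 1 - θR`. Since `sinh t < t` for `t < 0`, taking `t = log √x` gives
`√x · (-log x) < 1 - x`, and likewise for `y`. Hence the subtracted term
`2 · x y (-log x)(-log y) / (θL θR)` is less than `2 √x √y ≤ x + y = 2 - θL - θR`.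
-/

open Real

lemma sqrt_mul_neg_log_lt_one_sub {x : ℝ} (hx0 : 0 < x) (hx1 : x < 1) :
    √x * -log x < 1 - x := by
  have hs0 : 0 < √x := sqrt_pos.mpr hx0
  have hlog : log √x < 0 := by
    rw [log_sqrt hx0.le]
    linarith [log_neg hx0 hx1]
  have hsinh := sinh_lt_self_iff.mpr hlog
  rw [sinh_log hs0, log_sqrt hx0.le] at hsinh
  have hmul : √x * (√x - (√x)⁻¹) < √x * log x := by
    linarith [mul_lt_mul_of_pos_left hsinh hs0]
  rw [mul_sub, mul_inv_cancel₀ hs0.ne', mul_self_sqrt hx0.le] at hmul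
  linarith

theorem stmt2 (θL θR : ℝ) (hL0 : 0 < θL) (hL1 : θL < 1) (hR0 : 0 < θR) (hR1 : θR < 1) :
    2 - θL - θR - 2 * ((1 - θL) * (1 - θR) / (θL * θR)) * Real.log (1 - θL) * Real.log (1 - θR)
      > 0 := by
  set x := 1 - θL with hx
  set y := 1 - θR with hy
  have hx0 : 0 < x := by linarith
  have hy0 : 0 < y := by linarith
  have hL : √x * -log x < θL := by linarith [sqrt_mul_neg_log_lt_one_sub hx0 (by linarith)]
  have hR : √y * -log y < θR := by linarith [sqrt_mul_neg_log_lt_one_sub hy0 (by linarith)]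
  have hprod : (√x * -log x) * (√y * -log y) < θL * θR :=
    mul_lt_mul'' hL hR (mul_nonneg (sqrt_nonneg x) (neg_nonneg.mpr (log_nonpos hx0.le (by linarith))))
      (mul_nonneg (sqrt_nonneg y) (neg_nonneg.mpr (log_nonpos hy0.le (by linarith))))
  have hterm : x * y / (θL * θR) * log x * log y < √x * √y := by
    calc x * y / (θL * θR) * log x * log y
        = (√x * -log x) * (√y * -log y) / (θL * θR) * (√x * √y) := by
          field_simp
          rw [sq_sqrt hx0.le, sq_sqrt hy0.le]
          ring
      _ < 1 * (√x * √y) := by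
          gcongr
          exact (div_lt_one (by positivity)).mpr hprod
      _ = √x * √y := one_mul _
  have hamgm : 2 * √x * √y ≤ x + y := by
    simpa [sq_sqrt hx0.le, sq_sqrt hy0.le] using two_mul_le_add_sq √x √y
  linarith
end

section
/- For all real numbers θ_L, θ_R with 0 < θ_L < 1 and 0 < θ_R < 1, it holds that ((1-θ_L)(1-θ_R)/(θ_L θ_R)) * log(1-θ_L) * log(1-θ_R) < sqrt((1-θ_L)(1-θ_R)), and hence this quantity is strictly less than 1. -/
/-!
Substituting `u = e^{-2s}`, the bound `-log u < (1 - u) / √u` for `0 < u < 1` is `s < sinh s`.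
Taking `u = 1 - x` gives `(1 - x) / x · (-log (1 - x)) < √(1 - x)`, and the two-variable quantity
is the product of two such positive factors.
-/

open Real

theorem Real.neg_log_lt_div_sqrt {u : ℝ} (h0 : 0 < u) (h1 : u < 1) :
    -log u < (1 - u) / √u := by
  set s := -log u / 2 with hs_def
  have hs : 0 < s := by have := log_neg h0 h1; linarith
  have hexp_neg : exp (-s) = √u := by
    rw [← exp_log (sqrt_pos.2 h0), log_sqrt h0.le, hs_def, neg_div, neg_neg]
  have hexp : exp s = (√u)⁻¹ := by rw [← hexp_neg, exp_neg, inv_inv]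
  calc -log u = 2 * s := by ring
    _ < exp s - exp (-s) := by linarith [sinh_eq s, self_lt_sinh_iff.2 hs]
    _ = (1 - u) / √u := by
        rw [hexp, hexp_neg]
        field_simp
        rw [sq_sqrt h0.le]

lemma one_sub_div_mul_neg_log_one_sub_lt_sqrt {x : ℝ} (h0 : 0 < x) (h1 : x < 1) :
    (1 - x) / x * -log (1 - x) < √(1 - x) := by
  have hu : 0 < 1 - x := by linarith
  calc (1 - x) / x * -log (1 - x) < (1 - x) / x * ((1 - (1 - x)) / √(1 - x)) :=
        mul_lt_mul_of_pos_left (neg_log_lt_div_sqrt hu (by linarith)) (by positivity)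
    _ = √(1 - x) := by
        rw [sub_sub_cancel, div_mul_div_cancel₀ h0.ne', div_sqrt]

lemma one_sub_div_mul_neg_log_one_sub_pos {x : ℝ} (h0 : 0 < x) (h1 : x < 1) :
    0 < (1 - x) / x * -log (1 - x) :=
  mul_pos (div_pos (by linarith) h0) (neg_pos.2 (log_neg (by linarith) (by linarith)))

theorem stmt3 (θL θR : ℝ) (hL0 : 0 < θL) (hL1 : θL < 1) (hR0 : 0 < θR) (hR1 : θR < 1) :
    ((1 - θL) * (1 - θR) / (θL * θR)) * Real.log (1 - θL) * Real.log (1 - θR)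
        < Real.sqrt ((1 - θL) * (1 - θR)) ∧
    ((1 - θL) * (1 - θR) / (θL * θR)) * Real.log (1 - θL) * Real.log (1 - θR) < 1 := by
  have hprod : ((1 - θL) * (1 - θR) / (θL * θR)) * log (1 - θL) * log (1 - θR)
      = ((1 - θL) / θL * -log (1 - θL)) * ((1 - θR) / θR * -log (1 - θR)) := by ring
  have hlt : ((1 - θL) * (1 - θR) / (θL * θR)) * log (1 - θL) * log (1 - θR)
      < √((1 - θL) * (1 - θR)) := by
    rw [hprod, sqrt_mul (by linarith)]
    exact mul_lt_mul'' (one_sub_div_mul_neg_log_one_sub_lt_sqrt hL0 hL1)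
      (one_sub_div_mul_neg_log_one_sub_lt_sqrt hR0 hR1)
      (one_sub_div_mul_neg_log_one_sub_pos hL0 hL1).le
      (one_sub_div_mul_neg_log_one_sub_pos hR0 hR1).le
  exact ⟨hlt, hlt.trans_le (sqrt_le_one.2 (by nlinarith))⟩
end

section
/- Let B and k be positive real constants with B < 2. Then the only solution (z_L, z_R) in [0,1) × [0,1) of the system z_L = (sqrt(k)/B) * log((1+z_R)/(1-z_R)) and z_R = (1/(B sqrt(k))) * log((1+z_L)/(1-z_L)) is z_L = z_R = 0. -/
/-!
Since `log ((1 + z) / (1 - z)) = 2 (z + z³/3 + z⁵/5 + ⋯) ≥ 2 z` on `[0, 1)`, the system gives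
`z_L ≥ (2 √k / B) z_R` and `z_R ≥ (2 / (B √k)) z_L`. The product of the two coefficients is
`4 / B² > 1`, which forces the nonnegative solution to vanish.
-/

open Real

lemma two_mul_le_log_one_add_div_one_sub {x : ℝ} (hx0 : 0 ≤ x) (hx1 : x < 1) :
    2 * x ≤ log ((1 + x) / (1 - x)) := by
  rw [log_div (by linarith) (by linarith)]
  have hsum := hasSum_log_sub_log_of_abs_lt_one (abs_lt.2 ⟨by linarith, hx1⟩)
  simpa using le_hasSum hsum 0 fun n _ ↦ by positivity

lemma eq_zero_of_mul_le_of_mul_le {x y a b : ℝ} (hx : 0 ≤ x) (hy : 0 ≤ y) (ha : 0 ≤ a)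
    (hab : 1 < a * b) (hxy : a * y ≤ x) (hyx : b * x ≤ y) : x = 0 ∧ y = 0 := by
  have hx0 : x = 0 := by nlinarith [mul_le_mul_of_nonneg_left hyx ha]
  have ha0 : 0 < a := ha.lt_of_ne (by rintro rfl; linarith [zero_mul b])
  exact ⟨hx0, le_antisymm (nonpos_of_mul_nonpos_right (hx0 ▸ hxy) ha0) hy⟩

theorem stmt5 (B k zL zR : ℝ) (hB0 : 0 < B) (hB2 : B < 2) (hk : 0 < k)
    (hzL : zL ∈ Set.Ico (0 : ℝ) 1) (hzR : zR ∈ Set.Ico (0 : ℝ) 1)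
    (h1 : zL = (Real.sqrt k / B) * Real.log ((1 + zR) / (1 - zR)))
    (h2 : zR = (1 / (B * Real.sqrt k)) * Real.log ((1 + zL) / (1 - zL))) :
    zL = 0 ∧ zR = 0 := by
  have hs : 0 < √k := sqrt_pos.2 hk
  have hL : (2 * √k / B) * zR ≤ zL :=
    calc (2 * √k / B) * zR = (√k / B) * (2 * zR) := by ring
      _ ≤ zL := h1 ▸ by gcongr; exact two_mul_le_log_one_add_div_one_sub hzR.1 hzR.2
  have hR : (2 / (B * √k)) * zL ≤ zR :=
    calc (2 / (B * √k)) * zL = (1 / (B * √k)) * (2 * zL) := by ring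
      _ ≤ zR := h2 ▸ by gcongr; exact two_mul_le_log_one_add_div_one_sub hzL.1 hzL.2
  have hcoeff : 1 < (2 * √k / B) * (2 / (B * √k)) := by
    rw [show (2 * √k / B) * (2 / (B * √k)) = 4 / B ^ 2 by field_simp; ring,
      one_lt_div (by positivity)]
    nlinarith
  exact eq_zero_of_mul_le_of_mul_le hzL.1 hzR.1 (by positivity) hcoeff hL hR
end

section
/- Let B > 2 and k > 0 be real constants. Define y(x) = (1/(B sqrt(k))) * log((1+x)/(1-x)) and g(x) = (sqrt(k)/B) * log((1+y(x))/(1-y(x))) on the set of x in (0,1) where |y(x)| < 1. Then g has at most two fixed points in [0,1), one of which is x = 0; in particular, the system z_L = (sqrt(k)/B) log((1+z_R)/(1-z_R)), z_R = (1/(B sqrt(k))) log((1+z_L)/(1-z_L)) has at most one solution with z_L, z_R > 0. -/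
/-!
Write `φ x = log ((1 + x) / (1 - x))`, so that `y = φ / (B √k)` and `g = (√k / B) · φ (y)`.
On `[0, 1)` the function `φ` is increasing, nonnegative and strictly convex (`φ' = 2 / (1 - x²)`),
so `g` is strictly convex on the interval where `0 ≤ y < 1`. A strictly convex function lies
strictly below each of its chords, hence cannot agree with the identity at three points; since
`g 0 = 0`, it has at most one positive fixed point.
-/

noncomputable def yAux (B k x : ℝ) : ℝ :=
  (1 / (B * Real.sqrt k)) * Real.log ((1 + x) / (1 - x))

noncomputable def gAux (B k x : ℝ) : ℝ :=
  (Real.sqrt k / B) * Real.log ((1 + yAux B k x) / (1 - yAux B k x))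

open Real Set

theorem StrictConvexOn.const_mul {E : Type*} [AddCommMonoid E] [Module ℝ E] {s : Set E}
    {f : E → ℝ} {c : ℝ} (hc : 0 < c) (hf : StrictConvexOn ℝ s f) :
    StrictConvexOn ℝ s fun x => c * f x := by
  refine ⟨hf.1, fun x hx y hy hxy a b ha hb hab => ?_⟩
  have := mul_lt_mul_of_pos_left (hf.2 hx hy hxy ha hb hab) hc
  simp only [smul_eq_mul] at this ⊢
  linarith

theorem StrictConvexOn.lt_self_of_fixed {s : Set ℝ} {f : ℝ → ℝ} (hf : StrictConvexOn ℝ s f)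
    {x y z : ℝ} (hx : x ∈ s) (hz : z ∈ s) (hxy : x < y) (hyz : y < z)
    (hfx : f x = x) (hfz : f z = z) : f y < y := by
  have hslope := hf.slope_strict_mono_adjacent hx hz hxy hyz
  rw [hfx, hfz, div_lt_div_iff₀ (by linarith) (by linarith)] at hslope
  nlinarith

theorem StrictConvexOn.subsingleton_fixed_gt {s : Set ℝ} {f : ℝ → ℝ}
    (hf : StrictConvexOn ℝ s f) {x₀ : ℝ} (hx₀ : x₀ ∈ s) (hfx₀ : f x₀ = x₀) :
    {x ∈ s | f x = x ∧ x₀ < x}.Subsingleton := by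
  intro x ⟨hx, hfx, hx₀x⟩ z ⟨hz, hfz, hx₀z⟩
  by_contra hne
  rcases lt_or_gt_of_ne hne with hxz | hzx
  · exact (hf.lt_self_of_fixed hx₀ hz hx₀x hxz hfx₀ hfz).ne hfx
  · exact (hf.lt_self_of_fixed hx₀ hx hx₀z hzx hfx₀ hfx).ne hfz

theorem hasDerivAt_log_one_add_div_one_sub {x : ℝ} (hx₁ : -1 < x) (hx₂ : x < 1) :
    HasDerivAt (fun t => log ((1 + t) / (1 - t))) (2 / (1 - x ^ 2)) x := by
  have hq : HasDerivAt (fun t => (1 + t) / (1 - t))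
      ((1 * (1 - x) - (1 + x) * -1) / (1 - x) ^ 2) x :=
    ((hasDerivAt_id' x).const_add 1).div ((hasDerivAt_id' x).const_sub 1) (by linarith)
  convert hq.log (div_ne_zero (by linarith) (by linarith)) using 1
  field_simp
  ring

theorem continuousOn_log_one_add_div_one_sub :
    ContinuousOn (fun x : ℝ => log ((1 + x) / (1 - x))) (Ioo (-1) 1) :=
  fun _ hx => (hasDerivAt_log_one_add_div_one_sub hx.1 hx.2).continuousAt.continuousWithinAt

theorem strictMonoOn_log_one_add_div_one_sub :
    StrictMonoOn (fun x : ℝ => log ((1 + x) / (1 - x))) (Ioo (-1) 1) :=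
  strictMonoOn_log.comp strictMonoOn_one_add_div_one_sub
    fun x hx => show 0 < (1 + x) / (1 - x) from div_pos (by linarith [hx.1]) (by linarith [hx.2])

theorem log_one_add_div_one_sub_nonneg {x : ℝ} (hx : x ∈ Ico 0 1) :
    0 ≤ log ((1 + x) / (1 - x)) :=
  log_nonneg <| (one_le_div (by linarith [hx.2])).2 (by linarith [hx.1])

theorem strictConvexOn_log_one_add_div_one_sub :
    StrictConvexOn ℝ (Ico 0 1) fun x : ℝ => log ((1 + x) / (1 - x)) := by
  apply StrictMonoOn.strictConvexOn_of_deriv (convex_Ico 0 1)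
  · exact continuousOn_log_one_add_div_one_sub.mono fun x hx => ⟨by linarith [hx.1], hx.2⟩
  · rw [interior_Ico]
    intro x hx y hy hxy
    rw [(hasDerivAt_log_one_add_div_one_sub (by linarith [hx.1]) hx.2).deriv,
      (hasDerivAt_log_one_add_div_one_sub (by linarith [hy.1]) hy.2).deriv]
    have : 0 < 1 - y ^ 2 := by nlinarith [hy.1, hy.2]
    gcongr
    nlinarith [hx.1]

theorem strictConvexOn_gAux {B k : ℝ} (hB : 0 < B) (hk : 0 < k) :
    StrictConvexOn ℝ {x ∈ Ico 0 1 | yAux B k x < 1} (gAux B k) := by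
  set D := {x ∈ Ico 0 1 | yAux B k x < 1}
  have hsk : 0 < √k := sqrt_pos.2 hk
  have hy : StrictConvexOn ℝ (Ico 0 1) (yAux B k) :=
    strictConvexOn_log_one_add_div_one_sub.const_mul (by positivity)
  have hD : Convex ℝ D := hy.convexOn.convex_lt 1
  have hyD : yAux B k '' D ⊆ Ico 0 1 := by
    rintro _ ⟨x, ⟨hx, hyx⟩, rfl⟩
    exact ⟨mul_nonneg (by positivity) (log_one_add_div_one_sub_nonneg hx), hyx⟩
  have hyD_conv : Convex ℝ (yAux B k '' D) := by
    refine convex_iff_isPreconnected.2 (hD.isPreconnected.image _ ?_)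
    exact (continuousOn_log_one_add_div_one_sub.mono fun _ hx => ⟨by linarith [hx.1.1], hx.1.2⟩)
      |>.const_smul (1 / (B * √k))
  have houter : StrictConvexOn ℝ (Ico 0 1) fun t => √k / B * log ((1 + t) / (1 - t)) :=
    strictConvexOn_log_one_add_div_one_sub.const_mul (by positivity)
  have houter_mono : StrictMonoOn (fun t => √k / B * log ((1 + t) / (1 - t))) (Ico 0 1) :=
    fun s hs t ht hst => mul_lt_mul_of_pos_left
      (strictMonoOn_log_one_add_div_one_sub ⟨by linarith [hs.1], hs.2⟩ ⟨by linarith [ht.1], ht.2⟩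
        hst) (by positivity)
  exact (houter.convexOn.subset hyD hyD_conv).comp_strictConvexOn (hy.subset (sep_subset _ _) hD)
    (houter_mono.mono hyD)

theorem gAux_zero (B k : ℝ) : gAux B k 0 = 0 := by
  simp [gAux, yAux]

theorem stmt6 (B k : ℝ) (hB : 2 < B) (hk : 0 < k) :
    ({x ∈ Set.Ico (0 : ℝ) 1 | |yAux B k x| < 1 ∧ gAux B k x = x}.encard ≤ 2 ∧
      gAux B k 0 = 0) ∧
    {q : ℝ × ℝ | 0 < q.1 ∧ q.1 < 1 ∧ 0 < q.2 ∧ q.2 < 1 ∧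
      q.1 = (Real.sqrt k / B) * Real.log ((1 + q.2) / (1 - q.2)) ∧
      q.2 = (1 / (B * Real.sqrt k)) * Real.log ((1 + q.1) / (1 - q.1))}.Subsingleton := by
  set D := {x ∈ Ico (0 : ℝ) 1 | yAux B k x < 1}
  have h0D : (0 : ℝ) ∈ D := ⟨left_mem_Ico.2 one_pos, by simp [yAux]⟩
  have hpos := (strictConvexOn_gAux (by linarith) hk).subsingleton_fixed_gt h0D (gAux_zero B k)
  refine ⟨⟨?_, gAux_zero B k⟩, ?_⟩
  · calc _ ≤ (insert 0 {x ∈ D | gAux B k x = x ∧ 0 < x}).encard := by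
          refine encard_mono fun x ⟨hx, hyx, hgx⟩ => ?_
          rcases hx.1.eq_or_lt with rfl | hx0
          · exact mem_insert _ _
          · exact mem_insert_of_mem _ ⟨⟨hx, (abs_lt.1 hyx).2⟩, hgx, hx0⟩
      _ ≤ 1 + 1 := (encard_insert_le _ _).trans
          (add_le_add_left (encard_le_one_iff_subsingleton.2 hpos) 1)
      _ = 2 := by norm_num
  · have hfixed : ∀ x y : ℝ, 0 < x → x < 1 → y < 1 →
        x = √k / B * log ((1 + y) / (1 - y)) → y = 1 / (B * √k) * log ((1 + x) / (1 - x)) →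
        x ∈ {x ∈ D | gAux B k x = x ∧ 0 < x} := by
      intro x y hx0 hx1 hy1 hgx hyx
      refine ⟨⟨⟨hx0.le, hx1⟩, by rwa [yAux, ← hyx]⟩, ?_, hx0⟩
      rw [gAux, yAux, ← hyx, hgx]
    rintro ⟨x, y⟩ ⟨hx0, hx1, -, hy1, hgx, hyx⟩ ⟨x', y'⟩ ⟨hx0', hx1', -, hy1', hgx', hyx'⟩
    obtain rfl : x = x' :=
      hpos (hfixed x y hx0 hx1 hy1 hgx hyx) (hfixed x' y' hx0' hx1' hy1' hgx' hyx')
    exact Prod.ext rfl (hyx.trans hyx'.symm)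
end

section
/- Let B, k > 0 and suppose θ_L, θ_R ∈ (0,1) satisfy exp(-B sqrt(k) θ_R) = 1 - θ_L and exp(-(B/sqrt(k)) θ_L) = 1 - θ_R. Then (1 - θ_L)(1 - θ_R) B^2 < 1. -/
/-! After the substitution `a = B √k θ_R`, `b = (B / √k) θ_L` the hypotheses read
`1 - θ_L = exp (-a)` and `1 - θ_R = exp (-b)`, while `a b = B² θ_L θ_R`. Since `exp x > 1 + x`,
`a exp (-a) < 1 - exp (-a) = θ_L` and likewise for `b`; multiplying the two bounds gives
`B² θ_L θ_R (1 - θ_L)(1 - θ_R) < θ_L θ_R`. -/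

open Real

theorem Real.mul_exp_neg_lt_one_sub_exp_neg {x : ℝ} (hx : x ≠ 0) :
    x * exp (-x) < 1 - exp (-x) := by
  have h := mul_lt_mul_of_pos_right (add_one_lt_exp hx) (exp_pos (-x))
  rw [← exp_add, add_neg_cancel, exp_zero, add_mul, one_mul] at h
  linarith

theorem Real.mul_mul_exp_neg_mul_exp_neg_lt {a b : ℝ} (ha : 0 < a) (hb : 0 < b) :
    a * b * (exp (-a) * exp (-b)) < (1 - exp (-a)) * (1 - exp (-b)) := by
  rw [mul_mul_mul_comm]
  exact mul_lt_mul'' (mul_exp_neg_lt_one_sub_exp_neg ha.ne')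
    (mul_exp_neg_lt_one_sub_exp_neg hb.ne') (by positivity) (by positivity)

theorem stmt9 (B k θL θR : ℝ) (hB : 0 < B) (hk : 0 < k)
    (hθL : θL ∈ Set.Ioo (0 : ℝ) 1) (hθR : θR ∈ Set.Ioo (0 : ℝ) 1)
    (h1 : Real.exp (-(B * Real.sqrt k * θR)) = 1 - θL)
    (h2 : Real.exp (-((B / Real.sqrt k) * θL)) = 1 - θR) :
    (1 - θL) * (1 - θR) * B ^ 2 < 1 := by
  have hsk : 0 < √k := sqrt_pos.2 hk
  have hθ : 0 < θL * θR := mul_pos hθL.1 hθR.1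
  have key := mul_mul_exp_neg_mul_exp_neg_lt (a := B * √k * θR) (b := B / √k * θL)
    (by have := hθR.1; positivity) (by have := hθL.1; positivity)
  have hab : B * √k * θR * (B / √k * θL) = B ^ 2 * (θL * θR) := by
    field_simp
  rw [h1, h2, hab, sub_sub_cancel, sub_sub_cancel] at key
  exact lt_of_mul_lt_mul_right (by linarith) hθ.le
end

section
/- Let B, k, α_L, α_R > 0 and suppose θ_L, θ_R ∈ (0,1) satisfy exp(-B sqrt(k) α_R θ_R) = 1 - θ_L and exp(-(B/sqrt(k)) α_L θ_L) = 1 - θ_R. Then 1 - (1 - θ_L)(1 - θ_R) B^2 α_L α_R > 0; in particular, 1 - ((1-θ_L)(1-θ_R)/(θ_L θ_R)) * log(1-θ_L) * log(1-θ_R) > 1 - sqrt((1-θ_L)(1-θ_R)) > 0. -/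
/-!
Taking logarithms of the two fixed-point equations gives
`log (1 - θL) * log (1 - θR) = B ^ 2 * αL * αR * θL * θR`, so
`(1 - θL) * (1 - θR) * B ^ 2 * αL * αR` is the middle quantity of the claim. Each factor
`(1 - θ) * (-log (1 - θ)) / θ` is below `√(1 - θ)`: with `t = 1 - θ` and `y = log √t < 0`, this is
`sinh y < y`. Hence the middle quantity is below `√((1 - θL) * (1 - θR)) < 1`.
-/

open Real

lemma neg_log_lt_inv_sqrt_sub_sqrt {t : ℝ} (ht0 : 0 < t) (ht1 : t < 1) :
    -log t < (√t)⁻¹ - √t := by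
  have hy : log √t < 0 := log_neg (sqrt_pos.mpr ht0) ((sqrt_lt' one_pos).mpr (by simpa))
  have hsinh := sinh_lt_self_iff.mpr hy
  rw [sinh_log (sqrt_pos.mpr ht0), log_sqrt ht0.le] at hsinh
  linarith

lemma one_sub_mul_neg_log_one_sub_div_lt_sqrt {θ : ℝ} (h0 : 0 < θ) (h1 : θ < 1) :
    (1 - θ) * -log (1 - θ) / θ < √(1 - θ) := by
  have ht : 0 < 1 - θ := sub_pos.mpr h1
  have hlog := neg_log_lt_inv_sqrt_sub_sqrt ht (by linarith)
  rw [div_lt_iff₀ h0]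
  calc (1 - θ) * -log (1 - θ) < (1 - θ) * ((√(1 - θ))⁻¹ - √(1 - θ)) :=
        mul_lt_mul_of_pos_left hlog ht
    _ = √(1 - θ) * θ := by
        field_simp
        rw [sq_sqrt ht.le]
        ring

lemma one_sub_mul_neg_log_one_sub_div_nonneg {θ : ℝ} (h0 : 0 < θ) (h1 : θ < 1) :
    0 ≤ (1 - θ) * -log (1 - θ) / θ := by
  have hlog : log (1 - θ) < 0 := log_neg (by linarith) (by linarith)
  exact div_nonneg (mul_nonneg (by linarith) (by linarith)) h0.le

lemma mul_log_one_sub_mul_log_one_sub_lt_sqrt {a b : ℝ} (ha : a ∈ Set.Ioo (0 : ℝ) 1)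
    (hb : b ∈ Set.Ioo (0 : ℝ) 1) :
    (1 - a) * (1 - b) / (a * b) * log (1 - a) * log (1 - b) < √((1 - a) * (1 - b)) := by
  calc (1 - a) * (1 - b) / (a * b) * log (1 - a) * log (1 - b)
        = ((1 - a) * -log (1 - a) / a) * ((1 - b) * -log (1 - b) / b) := by
        field_simp
    _ < √(1 - a) * √(1 - b) :=
        mul_lt_mul'' (one_sub_mul_neg_log_one_sub_div_lt_sqrt ha.1 ha.2)
          (one_sub_mul_neg_log_one_sub_div_lt_sqrt hb.1 hb.2)
          (one_sub_mul_neg_log_one_sub_div_nonneg ha.1 ha.2)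
          (one_sub_mul_neg_log_one_sub_div_nonneg hb.1 hb.2)
    _ = √((1 - a) * (1 - b)) := (sqrt_mul (by linarith [ha.2]) _).symm

theorem stmt10_general (B k αL αR θL θR : ℝ) (hk : 0 < k)
    (hθL : θL ∈ Set.Ioo (0 : ℝ) 1) (hθR : θR ∈ Set.Ioo (0 : ℝ) 1)
    (h1 : Real.exp (-(B * Real.sqrt k * αR * θR)) = 1 - θL)
    (h2 : Real.exp (-((B / Real.sqrt k) * αL * θL)) = 1 - θR) :
    0 < 1 - (1 - θL) * (1 - θR) * B ^ 2 * αL * αR ∧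
    1 - ((1 - θL) * (1 - θR) / (θL * θR)) * Real.log (1 - θL) * Real.log (1 - θR)
      > 1 - Real.sqrt ((1 - θL) * (1 - θR)) ∧
    1 - Real.sqrt ((1 - θL) * (1 - θR)) > 0 := by
  have hsk : √k ≠ 0 := (sqrt_pos.mpr hk).ne'
  have hθL0 : θL ≠ 0 := hθL.1.ne'
  have hθR0 : θR ≠ 0 := hθR.1.ne'
  have hlogs : (1 - θL) * (1 - θR) / (θL * θR) * log (1 - θL) * log (1 - θR)
      = (1 - θL) * (1 - θR) * B ^ 2 * αL * αR := by
    rw [← h1, ← h2, log_exp, log_exp]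
    field_simp
  have hlt := mul_log_one_sub_mul_log_one_sub_lt_sqrt hθL hθR
  have hsqrt : √((1 - θL) * (1 - θR)) < 1 :=
    (sqrt_lt' one_pos).mpr (by nlinarith [hθL.1, hθL.2, hθR.1, hθR.2])
  refine ⟨?_, ?_, ?_⟩ <;> linarith

theorem stmt10 (B k αL αR θL θR : ℝ) (hB : 0 < B) (hk : 0 < k)
    (hαL : 0 < αL) (hαR : 0 < αR)
    (hθL : θL ∈ Set.Ioo (0 : ℝ) 1) (hθR : θR ∈ Set.Ioo (0 : ℝ) 1)
    (h1 : Real.exp (-(B * Real.sqrt k * αR * θR)) = 1 - θL)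
    (h2 : Real.exp (-((B / Real.sqrt k) * αL * θL)) = 1 - θR) :
    0 < 1 - (1 - θL) * (1 - θR) * B ^ 2 * αL * αR ∧
    1 - ((1 - θL) * (1 - θR) / (θL * θR)) * Real.log (1 - θL) * Real.log (1 - θR)
      > 1 - Real.sqrt ((1 - θL) * (1 - θR)) ∧
    1 - Real.sqrt ((1 - θL) * (1 - θR)) > 0 :=
  stmt10_general B k αL αR θL θR hk hθL hθR h1 h2
end

section
/- Let p ∈ (0,1] be a constant and let M ≥ 100/p be a constant. With probability 1 - e^{-Ω(n)} over the choice of the Erdős–Rényi random graph G ~ G(n,p), the following holds: for every subset U of vertices with |U| ≥ n/10 and every S ⊆ U with |S| ≥ M^2 and |U∖S| ≥ M^2, the number of edges of G with one endpoint in S and the other in U∖S is at least M·n. -/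
open MeasureTheory ProbabilityTheory Real Finset
open scoped ENNReal NNReal

set_option linter.deprecated false

/-!
For fixed `U` and `S`, the number of edges between `S` and `U \ S` is a sum of `|S| |U \ S|`
independent Bernoulli(`p`) variables, and `|S| |U \ S| ≥ M² |U| / 2 ≥ M² n / 20` because both
sides have at least `M²` vertices. The Chernoff bound at `t = -1`, together with
`1 - p + p / e ≤ e^{-p/2}`, bounds the probability of fewer than `M n` such edges by
`exp (M n - p |S| |U \ S| / 2) ≤ e^{-150 n}`, since `p M ≥ 100`. A union bound over the at most
`4^n` pairs `(U, S)` leaves failure probability at most `e^{-n}`.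
-/

section Bernoulli

variable {q : ℝ≥0} (hq : q ≤ 1)

lemma mgf_bernoulli_indicator (t : ℝ) :
    mgf (fun b : Bool => if b then (1 : ℝ) else 0) (PMF.bernoulli q hq).toMeasure t
      = 1 - q + q * exp t := by
  rw [mgf, PMF.integral_eq_sum, Fintype.sum_bool]
  simp only [PMF.bernoulli_apply]
  simp [ENNReal.toReal_sub_of_le (ENNReal.coe_le_one_iff.mpr hq) ENNReal.one_ne_top]
  ring

lemma one_sub_add_mul_exp_neg_one_le {p : ℝ} (hp : 0 ≤ p) :
    1 - p + p * exp (-1) ≤ exp (-(p / 2)) := by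
  nlinarith [exp_neg_one_lt_half, add_one_le_exp (-(p / 2))]

variable {ι : Type*} [Fintype ι]

theorem measure_card_filter_true_le_le (T : Finset ι) (a : ℝ) :
    Measure.pi (fun _ : ι => (PMF.bernoulli q hq).toMeasure)
        {g | (#{e ∈ T | g e = true} : ℝ) ≤ a}
      ≤ ENNReal.ofReal (exp (a - q / 2 * #T)) := by
  set ν : ι → Measure Bool := fun _ => (PMF.bernoulli q hq).toMeasure
  set μ := Measure.pi ν
  let X : ι → (ι → Bool) → ℝ := fun e g => if g e then 1 else 0
  have hindep : iIndepFun X μ :=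
    iIndepFun_pi (X := fun _ (b : Bool) => if b then (1 : ℝ) else 0) fun _ =>
      (measurable_of_countable _).aemeasurable
  have hsum : ∀ g, (∑ e ∈ T, X e) g = #{e ∈ T | g e = true} := fun g => by
    simp [X, Finset.sum_boole]
  have hmgf : ∀ e, mgf (X e) μ (-1) = 1 - q + q * exp (-1) := fun e => by
    have he := measurePreserving_eval ν e
    rw [← mgf_bernoulli_indicator hq, show (PMF.bernoulli q hq).toMeasure = ν e from rfl,
      ← he.map_eq,
      mgf_map he.measurable.aemeasurable (measurable_of_countable _).aestronglyMeasurable]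
    rfl
  have hchernoff := measure_le_le_exp_mul_mgf (μ := μ) (X := ∑ e ∈ T, X e) a (t := -1)
    (by norm_num) .of_finite
  rw [hindep.mgf_sum fun _ => measurable_of_countable _, prod_congr rfl fun e _ => hmgf e,
    prod_const] at hchernoff
  simp only [hsum, neg_neg, one_mul] at hchernoff
  calc μ {g | (#{e ∈ T | g e = true} : ℝ) ≤ a}
      = ENNReal.ofReal (μ.real {g | (#{e ∈ T | g e = true} : ℝ) ≤ a}) := by
        rw [ofReal_measureReal]
    _ ≤ ENNReal.ofReal (exp a * exp (-(q / 2)) ^ #T) := by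
        gcongr
        refine hchernoff.trans ?_
        gcongr
        · nlinarith [exp_pos (-1)]
        · exact one_sub_add_mul_exp_neg_one_le q.2
    _ = ENNReal.ofReal (exp (a - q / 2 * #T)) := by
        rw [← exp_nat_mul, ← exp_add]
        ring_nf

end Bernoulli

section Cut

lemma Sym2.injOn_mk_uncurry_of_disjoint {V : Type*} {s t : Set V} (h : Disjoint s t) :
    Set.InjOn Sym2.mk.uncurry (s ×ˢ t) := by
  rintro ⟨a, b⟩ ⟨ha, -⟩ ⟨c, d⟩ ⟨-, hd⟩ hab
  rcases Sym2.eq_iff.mp hab with ⟨rfl, rfl⟩ | ⟨rfl, rfl⟩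
  · rfl
  · exact (Set.disjoint_left.mp h ha hd).elim

variable {V : Type*} [DecidableEq V] {s t : Finset V}

lemma card_image_sym2Mk_product (h : Disjoint s t) :
    #((s ×ˢ t).image Sym2.mk.uncurry) = #s * #t := by
  rw [card_image_of_injOn, card_product]
  rw [coe_product]
  exact Sym2.injOn_mk_uncurry_of_disjoint (disjoint_coe.mpr h)

lemma card_filter_product_eq_card_filter_image (h : Disjoint s t) (g : Sym2 V → Bool) :
    #{x ∈ s ×ˢ t | g s(x.1, x.2) = true} =
      #{e ∈ (s ×ˢ t).image Sym2.mk.uncurry | g e = true} := by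
  rw [filter_image, card_image_of_injOn]
  · rfl
  · exact (Sym2.injOn_mk_uncurry_of_disjoint (disjoint_coe.mpr h)).mono fun x hx => by
      simpa using (mem_filter.mp hx).1

theorem measure_card_cut_lt_le [Fintype V] {q : ℝ≥0} (hq : q ≤ 1) (h : Disjoint s t)
    (a : ℝ) :
    Measure.pi (fun _ : Sym2 V => (PMF.bernoulli q hq).toMeasure)
        {g | (#{x ∈ s ×ˢ t | g s(x.1, x.2) = true} : ℝ) < a}
      ≤ ENNReal.ofReal (exp (a - q / 2 * (#s * #t))) := by
  have := measure_card_filter_true_le_le hq ((s ×ˢ t).image Sym2.mk.uncurry) a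
  rw [card_image_sym2Mk_product h] at this
  push_cast at this
  refine (measure_mono fun g hg => ?_).trans this
  simp only [Set.mem_setOf_eq, card_filter_product_eq_card_filter_image h] at hg ⊢
  exact hg.le

end Cut

lemma mul_sub_half_mul_mul_le {p M n a b : ℝ} (hp : 0 ≤ p) (hpM : 100 ≤ p * M)
    (hM : 100 ≤ M) (hn : 0 ≤ n) (ha : M ^ 2 ≤ a) (hb : M ^ 2 ≤ b) (hab : n / 10 ≤ a + b) :
    M * n - p / 2 * (a * b) ≤ -150 * n := by
  have hprod : M ^ 2 * (a + b) ≤ 2 * (a * b) := by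
    nlinarith [mul_le_mul_of_nonneg_right ha (sq_nonneg M |>.trans hb),
      mul_le_mul_of_nonneg_right hb (sq_nonneg M |>.trans ha)]
  have : 100 * (M * n) ≤ p * M * (M * n) :=
    mul_le_mul_of_nonneg_right hpM (by positivity)
  nlinarith [mul_le_mul_of_nonneg_left hprod hp,
    mul_le_mul_of_nonneg_left hab (by positivity : 0 ≤ p * M ^ 2)]

theorem measure_card_cut_lt_le_exp {V : Type*} [Fintype V] [DecidableEq V] {p M : ℝ}
    (hp0 : 0 < p) (hp1 : p ≤ 1) (hpM : 100 ≤ p * M) (hM : 100 ≤ M) (n : ℕ) {U S : Finset V}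
    (hU : (n : ℝ) / 10 ≤ #U) (hSU : S ⊆ U) (hS : M ^ 2 ≤ (#S : ℝ))
    (hUS : M ^ 2 ≤ (#(U \ S) : ℝ)) :
    Measure.pi (fun _ : Sym2 V =>
        (PMF.bernoulli (Real.toNNReal p) (Real.toNNReal_le_one.mpr hp1)).toMeasure)
        {g | (#{x ∈ S ×ˢ (U \ S) | g s(x.1, x.2) = true} : ℝ) < M * n}
      ≤ ENNReal.ofReal (exp (-150 * n)) := by
  refine (measure_card_cut_lt_le _ disjoint_sdiff_self_right _).trans ?_
  gcongr
  rw [Real.coe_toNNReal _ hp0.le]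
  refine mul_sub_half_mul_mul_le hp0.le hpM hM n.cast_nonneg hS hUS ?_
  rwa [← Nat.cast_add, add_comm, card_sdiff_add_card_eq_card hSU]

section UnionBound

variable {α : Type*} [MeasurableSpace α] {μ : Measure α}

lemma measure_biUnion_le_card_mul {ι : Type*} (A : Finset ι) {s : ι → Set α} {ε : ℝ≥0∞}
    (h : ∀ i ∈ A, μ (s i) ≤ ε) : μ (⋃ i ∈ A, s i) ≤ #A * ε := by
  rw [← nsmul_eq_mul]
  exact (measure_biUnion_finset_le A s).trans (sum_le_card_nsmul A _ ε h)

lemma one_sub_le_measure_of_measure_compl_le [IsProbabilityMeasure μ] {s : Set α}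
    {ε : ℝ≥0∞} (h : μ sᶜ ≤ ε) : 1 - ε ≤ μ s := by
  rw [tsub_le_iff_right, ← measure_univ (μ := μ), ← Set.union_compl_self s]
  exact (measure_union_le s sᶜ).trans (by gcongr)

end UnionBound

lemma four_pow_mul_ofReal_exp_le (n : ℕ) :
    4 ^ n * ENNReal.ofReal (exp (-150 * n)) ≤ ENNReal.ofReal (exp (-1 * n)) := by
  have h4 : (4 : ℝ) ≤ exp 149 := by linarith [add_one_le_exp (149 : ℝ)]
  rw [← ENNReal.ofReal_ofNat, ← ENNReal.ofReal_pow (by norm_num),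
    ← ENNReal.ofReal_mul (by positivity)]
  gcongr
  calc (4 : ℝ) ^ n * exp (-150 * n) ≤ exp 149 ^ n * exp (-150 * n) := by gcongr
    _ = exp (-1 * n) := by rw [← exp_nat_mul, ← exp_add]; ring_nf

theorem stmt12 (p M : ℝ) (hp0 : 0 < p) (hp1 : p ≤ 1) (hM : 100 / p ≤ M) :
    ∃ c > (0 : ℝ), ∃ N : ℕ, ∀ n : ℕ, N ≤ n →
      (Measure.pi fun _ : Sym2 (Fin n) =>
          (PMF.bernoulli (Real.toNNReal p) (Real.toNNReal_le_one.mpr hp1)).toMeasure)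
        {g | ∀ U : Finset (Fin n), (n : ℝ) / 10 ≤ U.card →
          ∀ S ⊆ U, M ^ 2 ≤ (S.card : ℝ) → M ^ 2 ≤ ((U \ S).card : ℝ) →
            M * n ≤ ((((S ×ˢ (U \ S)).filter fun q => g s(q.1, q.2) = true).card : ℝ))}
        ≥ 1 - ENNReal.ofReal (Real.exp (-c * n)) := by
  classical
  have hpM : 100 ≤ p * M := by rwa [div_le_iff₀ hp0, mul_comm] at hM
  have hM100 : 100 ≤ M := by nlinarith
  refine ⟨1, one_pos, 0, fun n _ => one_sub_le_measure_of_measure_compl_le ?_⟩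
  let A : Finset (Finset (Fin n) × Finset (Fin n)) := {US | (n : ℝ) / 10 ≤ #US.1 ∧
    US.2 ⊆ US.1 ∧ M ^ 2 ≤ (#US.2 : ℝ) ∧ M ^ 2 ≤ (#(US.1 \ US.2) : ℝ)}
  calc _ ≤ Measure.pi _ (⋃ US ∈ A,
          {g | (#{x ∈ US.2 ×ˢ (US.1 \ US.2) | g s(x.1, x.2) = true} : ℝ) < M * n}) :=
        measure_mono fun g hg => by
          simp only [Set.mem_compl_iff, Set.mem_setOf_eq, not_forall, not_le] at hg
          obtain ⟨U, hU, S, hSU, hS, hUS, hcut⟩ := hg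
          exact Set.mem_biUnion (x := (U, S)) (by simp [A, hU, hSU, hS, hUS]) hcut
    _ ≤ #A * ENNReal.ofReal (exp (-150 * n)) := measure_biUnion_le_card_mul A fun US hUS => by
        obtain ⟨hU, hSU, hS, hUS⟩ := (mem_filter.mp hUS).2
        exact measure_card_cut_lt_le_exp hp0 hp1 hpM hM100 n hU hSU hS hUS
    _ ≤ 4 ^ n * ENNReal.ofReal (exp (-150 * n)) := by
        gcongr
        exact_mod_cast (card_filter_le _ _).trans_eq (by simp [← mul_pow])
    _ ≤ ENNReal.ofReal (exp (-1 * n)) := four_pow_mul_ofReal_exp_le n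
end
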